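/- arXiv:1711.09460 — 3 statements merged into one kernel-verified Lean document; each statement's English description precedes it below -/
import Mathlib

section
/- Let V ⊆ ℝ be a bounded interval of positive length and ω ⊆ V a measurable subset of positive Lebesgue measure. Then for every real polynomial p of degree at most k: sup_{t ∈ V} |p(t)| ≤ (4·|V|/|ω|)^k · sup_{t ∈ ω} |p(t)|, where |·| denotes Lebesgue measure. -/
/-!
Split `ω` at `t`. Since the two pieces have total measure at least `|ω|` and the two intervals
`[a, t]`, `[t, b]` have total length `b - a`, one piece `ω'` has positive measure and
`|J| / |ω'| ≤ (b - a) / |ω|`, where `J` is its interval; so it suffices to bound `|p t|` when `t` is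
an endpoint of an interval `J ⊇ ω'`.

The distribution function `s ↦ |ω' ∩ (-∞, s]|` is continuous and 1-Lipschitz, so `closure ω'`
contains points `x i` (`i ≤ k`) at which it takes the values `|ω'| (1 + cos (i π / k)) / 2`. These
points are at least as far apart as the Chebyshev extremal nodes `cos (i π / k)` dilated by
`|ω'| / 2`, and `t` is at most as far from them as `y = 2 |J| / |ω'| - 1 ≥ 1` is from the nodes
after the same dilation. Comparing the Lagrange bases factor by factor, `|p t|` is at most
`sup_ω |p|` times the Lebesgue function of the Chebyshev nodes at `y`, which is `T k y ≤ (2 y) ^ k`.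
-/

open MeasureTheory Polynomial Set
open scoped ENNReal

namespace Lagrange

section Field

variable {F ι : Type*} [Field F] [DecidableEq ι] {s : Finset ι} {v : ι → F}

theorem eval_basis (i : ι) (x : F) :
    (Lagrange.basis s v i).eval x = ∏ j ∈ s.erase i, (x - v j) / (v i - v j) := by
  simp only [Lagrange.basis, basisDivisor, eval_prod, eval_mul, eval_C, eval_sub, eval_X]
  exact Finset.prod_congr rfl fun j _ => by rw [div_eq_inv_mul]

theorem eval_eq_sum_mul_eval_basis {p : F[X]} (hv : Set.InjOn v s) (hp : p.degree < s.card)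
    (x : F) : p.eval x = ∑ i ∈ s, p.eval (v i) * (Lagrange.basis s v i).eval x := by
  conv_lhs => rw [eq_interpolate hv hp]
  simp only [interpolate_apply, eval_finsetSum, eval_mul, eval_C]

end Field

variable {ι : Type*} [DecidableEq ι] {s : Finset ι} {v u : ι → ℝ}

theorem abs_eval_le_mul_sum_abs_eval_basis {p : ℝ[X]} {M : ℝ} (hv : Set.InjOn v s)
    (hp : p.degree < s.card) (hM : ∀ i ∈ s, |p.eval (v i)| ≤ M) (x : ℝ) :
    |p.eval x| ≤ M * ∑ i ∈ s, |(Lagrange.basis s v i).eval x| := by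
  rw [eval_eq_sum_mul_eval_basis hv hp, Finset.mul_sum]
  refine (Finset.abs_sum_le_sum_abs _ _).trans (Finset.sum_le_sum fun i hi => ?_)
  rw [abs_mul]
  exact mul_le_mul_of_nonneg_right (hM i hi) (abs_nonneg _)

theorem abs_eval_basis_le_of_dilation {c x y : ℝ} {i : ι} (hc : 0 < c) (hu : Set.InjOn u s)
    (hi : i ∈ s) (hnode : ∀ j ∈ s, c * |u i - u j| ≤ |v i - v j|)
    (hpoint : ∀ j ∈ s, |x - v j| ≤ c * |y - u j|) :
    |(Lagrange.basis s v i).eval x| ≤ |(Lagrange.basis s u i).eval y| := by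
  rw [eval_basis, eval_basis, Finset.abs_prod, Finset.abs_prod]
  refine Finset.prod_le_prod (fun _ _ => abs_nonneg _) fun j hj => ?_
  obtain ⟨hji, hj⟩ := Finset.mem_erase.1 hj
  have hne : 0 < |u i - u j| := abs_pos.2 (sub_ne_zero.2 fun h => hji (hu hj hi h.symm))
  calc |(x - v j) / (v i - v j)| = |x - v j| / |v i - v j| := abs_div _ _
    _ ≤ c * |y - u j| / (c * |u i - u j|) :=
      div_le_div₀ (by positivity) (hpoint j hj) (by positivity) (hnode j hj)
    _ = |(y - u j) / (u i - u j)| := by rw [mul_div_mul_left _ _ hc.ne', abs_div]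

end Lagrange

namespace Polynomial.Chebyshev

open Real

/-- At a point `y ≥ 1` the Lagrange basis at the Chebyshev extremal nodes has the sign pattern
of the values `(-1) ^ i` of `T k` at the nodes, so the Lebesgue function equals `T k`. -/
theorem sum_abs_eval_basis_node {k : ℕ} {y : ℝ} (hy : 1 ≤ y) :
    ∑ i ∈ Finset.range (k + 1), |(Lagrange.basis (Finset.range (k + 1)) (node k) i).eval y| =
      (T ℝ k).eval y := by
  have hdeg : (T ℝ k).degree < (Finset.range (k + 1)).card := by
    rw [degree_T, Finset.card_range]; exact_mod_cast k.lt_succ_self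
  rw [Lagrange.eval_eq_sum_mul_eval_basis (strictAntiOn_node k).injOn hdeg]
  refine Finset.sum_congr rfl fun i hi => ?_
  have hik : i ≤ k := Finset.mem_range_succ_iff.1 hi
  have hsign : 0 ≤ (-1) ^ i * (Lagrange.basis (Finset.range (k + 1)) (node k) i).eval y := by
    rw [Lagrange.eval_basis, Finset.prod_div_distrib]
    have hnum : 0 ≤ ∏ j ∈ (Finset.range (k + 1)).erase i, (y - node k j) :=
      Finset.prod_nonneg fun j _ => sub_nonneg.2 (node_mem_Icc.2.trans hy)
    calc (0 : ℝ) ≤ (∏ j ∈ (Finset.range (k + 1)).erase i, (y - node k j)) /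
          ((-1) ^ i * ∏ j ∈ (Finset.range (k + 1)).erase i, (node k i - node k j)) :=
          div_nonneg hnum (zero_lt_prod_node_sub_node hik).le
      _ = _ := by rw [div_eq_mul_inv, mul_inv, ← inv_pow, inv_neg_one]; ring
  rw [eval_T_real_node (Finset.mem_Iic.2 hik), ← abs_of_nonneg hsign, abs_mul, abs_neg_one_pow,
    one_mul]

theorem eval_T_real_le_two_mul_pow (k : ℕ) {y : ℝ} (hy : 1 ≤ y) :
    (T ℝ k).eval y ≤ (2 * y) ^ k := by
  have hθ : 0 ≤ (k : ℝ) * arcosh y := mul_nonneg k.cast_nonneg (arcosh_nonneg hy)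
  rw [← cosh_arcosh hy, T_real_cosh, Int.cast_natCast]
  calc cosh (k * arcosh y) ≤ exp (k * arcosh y) := by
        rw [cosh_eq]; linarith [exp_le_exp.2 (neg_le_self hθ)]
    _ = exp (arcosh y) ^ k := by rw [← exp_nat_mul]
    _ ≤ (2 * cosh (arcosh y)) ^ k := by
        gcongr
        rw [cosh_eq]; linarith [exp_pos (-arcosh y)]

end Polynomial.Chebyshev

section DistributionFunction

variable {ω : Set ℝ}

theorem measureReal_inter_Iic_le_add_sub (hω : volume ω ≠ ∞) {y z : ℝ} (hyz : y ≤ z) :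
    volume.real (ω ∩ Iic z) ≤ volume.real (ω ∩ Iic y) + (z - y) := by
  have hsub : ω ∩ Iic z ⊆ (ω ∩ Iic y) ∪ Ioc y z := fun x ⟨hx, hxz⟩ =>
    (le_or_gt x y).imp (fun h => ⟨hx, h⟩) fun h => ⟨h, hxz⟩
  have hfin : volume ((ω ∩ Iic y) ∪ Ioc y z) ≠ ∞ :=
    measure_union_ne_top (measure_ne_top_of_subset inter_subset_left hω) measure_Ioc_lt_top.ne
  calc volume.real (ω ∩ Iic z) ≤ volume.real ((ω ∩ Iic y) ∪ Ioc y z) := measureReal_mono hsub hfin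
    _ ≤ volume.real (ω ∩ Iic y) + volume.real (Ioc y z) := measureReal_union_le _ _
    _ = volume.real (ω ∩ Iic y) + (z - y) := by rw [Real.volume_real_Ioc_of_le hyz]

theorem lipschitzWith_measureReal_inter_Iic (hω : volume ω ≠ ∞) :
    LipschitzWith 1 fun y => volume.real (ω ∩ Iic y) := by
  refine LipschitzWith.of_le_add fun z y => ?_
  rcases le_total z y with h | h
  · refine (measureReal_mono ?_ (measure_ne_top_of_subset inter_subset_left hω)).trans
      (le_add_of_nonneg_right dist_nonneg)
    exact inter_subset_inter_right _ (Iic_subset_Iic.2 h)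
  · simpa [Real.dist_eq, abs_of_nonneg (sub_nonneg.2 h)] using
      measureReal_inter_Iic_le_add_sub hω h

theorem measureReal_inter_Iic_le_sub {a y : ℝ} (hω : ω ⊆ Ici a) (hay : a ≤ y) :
    volume.real (ω ∩ Iic y) ≤ y - a :=
  calc volume.real (ω ∩ Iic y) ≤ volume.real (Icc a y) :=
        measureReal_mono (fun _ ⟨hx, hxy⟩ => ⟨hω hx, hxy⟩) measure_Icc_lt_top.ne
    _ = y - a := Real.volume_real_Icc_of_le hay

theorem measureReal_le_sub_of_subset_Icc {a t : ℝ} (hω : ω ⊆ Icc a t) (hpos : 0 < volume.real ω) :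
    volume.real ω ≤ t - a := by
  have h := measureReal_mono hω (measure_Icc_lt_top (μ := volume)).ne
  rw [Real.volume_real_Icc] at h
  exact (le_max_iff.1 h).resolve_right hpos.not_ge

theorem exists_mem_closure_measureReal_inter_Iic_eq (hb : Bornology.IsBounded ω)
    (hne : ω.Nonempty) {s : ℝ} (hs₀ : 0 ≤ s) (hs : s ≤ volume.real ω) :
    ∃ x ∈ closure ω, volume.real (ω ∩ Iic x) = s := by
  set F := fun y => volume.real (ω ∩ Iic y)
  have hF : Continuous F := (lipschitzWith_measureReal_inter_Iic hb.measure_lt_top.ne).continuous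
  rcases hs₀.eq_or_lt with rfl | hs₀
  · obtain ⟨x, hx, hxmin⟩ := hb.isCompact_closure.exists_isLeast hne.closure
    refine ⟨x, hx, le_antisymm ?_ measureReal_nonneg⟩
    calc F x ≤ volume.real {x} := measureReal_mono
          (fun y ⟨hy, hyx⟩ => le_antisymm hyx (hxmin (subset_closure hy))) (by simp)
      _ = 0 := by simp [Measure.real]
  set S : Set ℝ := {y | s ≤ F y}
  obtain ⟨l, hl⟩ := hb.bddBelow
  obtain ⟨u, hu⟩ := hb.bddAbove
  have hSbdd : BddBelow S := by
    refine ⟨l, fun y hy => not_lt.1 fun hyl => hs₀.not_ge ?_⟩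
    have : ω ∩ Iic y = ∅ := eq_empty_of_forall_notMem fun z ⟨hz, hzy⟩ =>
      (hl hz).not_gt (hzy.trans_lt hyl)
    simpa [S, F, this] using hy
  have huS : u ∈ S := by
    have : ω ∩ Iic u = ω := inter_eq_left.2 fun z hz => hu hz
    simpa [S, F, this] using hs
  have hxS : sInf S ∈ S := (isClosed_le continuous_const hF).csInf_mem ⟨u, huS⟩ hSbdd
  have hlt : ∀ y < sInf S, F y < s := fun y hy => not_le.1 (notMem_of_lt_csInf (s := S) hy hSbdd)
  refine ⟨sInf S, ?_, le_antisymm ?_ hxS⟩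
  · by_contra h
    obtain ⟨y, hy, hyS⟩ := exists_Ioc_subset_of_mem_nhds
      (isClosed_closure.isOpen_compl.mem_nhds h) ⟨sInf S - 1, by linarith⟩
    have : F (sInf S) ≤ F y := measureReal_mono (fun z ⟨hz, hzx⟩ =>
      ⟨hz, not_lt.1 fun hzy => hyS ⟨hzy, hzx⟩ (subset_closure hz)⟩)
      (measure_ne_top_of_subset inter_subset_left hb.measure_lt_top.ne)
    exact (hlt y hy).not_ge (hxS.trans this)
  · exact le_of_tendsto ((hF.tendsto _).mono_left nhdsWithin_le_nhds)
      (eventually_nhdsWithin_of_forall (s := Iio (sInf S)) fun y hy => (hlt y hy).le)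

end DistributionFunction

open Polynomial.Chebyshev

namespace Polynomial

variable {a t b M : ℝ} {ω : Set ℝ} {p : ℝ[X]} {k : ℕ}

theorem abs_eval_le_mul_eval_T_of_subset_Icc (hω : ω ⊆ Icc a t) (hpos : 0 < volume.real ω)
    (hdeg : p.natDegree ≤ k) (hM : ∀ s ∈ ω, |p.eval s| ≤ M) :
    |p.eval t| ≤ M * (T ℝ k).eval (2 * (t - a) / volume.real ω - 1) := by
  set μ := volume.real ω
  set y := 2 * (t - a) / μ - 1
  have hb : Bornology.IsBounded ω := Metric.isBounded_Icc a t |>.subset hω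
  have hne : ω.Nonempty := nonempty_of_measureReal_ne_zero hpos.ne'
  have hμ : μ ≤ t - a := measureReal_le_sub_of_subset_Icc hω hpos
  have hy : 1 ≤ y := by rw [le_sub_iff_add_le, le_div_iff₀ hpos]; linarith
  have hμy : μ / 2 * y = t - a - μ / 2 := by simp only [y]; field_simp
  choose x hxω hFx using fun i : ℕ => exists_mem_closure_measureReal_inter_Iic_eq hb hne
    (s := μ * (1 + node k i) / 2) (by nlinarith [(node_mem_Icc (n := k) (i := i)).1])
    (by nlinarith [(node_mem_Icc (n := k) (i := i)).2])
  have hxI : ∀ i, x i ∈ Icc a t := fun i => closure_minimal hω isClosed_Icc (hxω i)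
  have hMx : ∀ i, |p.eval (x i)| ≤ M := fun i =>
    closure_minimal hM (isClosed_le p.continuous.abs continuous_const) (hxω i)
  have hM0 : 0 ≤ M := (abs_nonneg _).trans (hMx 0)
  have hgap : ∀ i j, μ / 2 * |node k i - node k j| ≤ |x i - x j| := by
    intro i j
    have h := (lipschitzWith_measureReal_inter_Iic hb.measure_lt_top.ne).dist_le_mul (x i) (x j)
    rwa [hFx, hFx, Real.dist_eq, Real.dist_eq, NNReal.coe_one, one_mul,
      show μ * (1 + node k i) / 2 - μ * (1 + node k j) / 2 = μ / 2 * (node k i - node k j) by ring,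
      abs_mul, abs_of_pos (half_pos hpos)] at h
  have hdist : ∀ j, |t - x j| ≤ μ / 2 * |y - node k j| := by
    intro j
    have h := measureReal_inter_Iic_le_sub (hω.trans Icc_subset_Ici_self) (hxI j).1
    rw [hFx] at h
    rw [abs_of_nonneg (sub_nonneg.2 (hxI j).2)]
    refine le_trans ?_ (mul_le_mul_of_nonneg_left (le_abs_self _) (by positivity))
    linarith
  have hinj : InjOn x (Finset.range (k + 1)) := fun i hi j hj hij => by
    refine (strictAntiOn_node k).injOn hi hj ?_
    have h := hgap i j
    rw [hij, sub_self, abs_zero] at h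
    exact sub_eq_zero.1 (abs_nonpos_iff.1 (nonpos_of_mul_nonpos_right h (half_pos hpos)))
  have hdeg' : p.degree < (Finset.range (k + 1)).card := by
    rw [Finset.card_range]
    exact degree_le_natDegree.trans_lt (by exact_mod_cast Nat.lt_succ_of_le hdeg)
  calc |p.eval t|
      ≤ M * ∑ i ∈ Finset.range (k + 1), |(Lagrange.basis (Finset.range (k + 1)) x i).eval t| :=
        Lagrange.abs_eval_le_mul_sum_abs_eval_basis hinj hdeg' (fun i _ => hMx i) t
    _ ≤ M * ∑ i ∈ Finset.range (k + 1),
          |(Lagrange.basis (Finset.range (k + 1)) (node k) i).eval y| := by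
        refine mul_le_mul_of_nonneg_left (Finset.sum_le_sum fun i hi => ?_) hM0
        exact Lagrange.abs_eval_basis_le_of_dilation (half_pos hpos) (strictAntiOn_node k).injOn
          hi (fun j _ => hgap i j) (fun j _ => hdist j)
    _ = M * (T ℝ k).eval y := by rw [sum_abs_eval_basis_node hy]

theorem abs_eval_right_le_of_subset_Icc (hω : ω ⊆ Icc a t) (hpos : 0 < volume.real ω)
    (hdeg : p.natDegree ≤ k) (hM : ∀ s ∈ ω, |p.eval s| ≤ M) :
    |p.eval t| ≤ (4 * (t - a) / volume.real ω) ^ k * M := by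
  have hμ := measureReal_le_sub_of_subset_Icc hω hpos
  have hy : 1 ≤ 2 * (t - a) / volume.real ω - 1 := by
    rw [le_sub_iff_add_le, le_div_iff₀ hpos]; linarith
  have hM0 : 0 ≤ M :=
    (abs_nonneg _).trans (hM _ (nonempty_of_measureReal_ne_zero hpos.ne').some_mem)
  calc |p.eval t| ≤ M * (T ℝ k).eval (2 * (t - a) / volume.real ω - 1) :=
        abs_eval_le_mul_eval_T_of_subset_Icc hω hpos hdeg hM
    _ ≤ M * (2 * (2 * (t - a) / volume.real ω - 1)) ^ k :=
        mul_le_mul_of_nonneg_left (eval_T_real_le_two_mul_pow k hy) hM0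
    _ ≤ (4 * (t - a) / volume.real ω) ^ k * M := by
        rw [mul_comm]
        gcongr
        linarith [show 2 * (2 * (t - a) / volume.real ω - 1) = 4 * (t - a) / volume.real ω - 2 by
          ring]

theorem abs_eval_left_le_of_subset_Icc (hω : ω ⊆ Icc t b) (hpos : 0 < volume.real ω)
    (hdeg : p.natDegree ≤ k) (hM : ∀ s ∈ ω, |p.eval s| ≤ M) :
    |p.eval t| ≤ (4 * (b - t) / volume.real ω) ^ k * M := by
  have h := abs_eval_right_le_of_subset_Icc (ω := -ω) (p := p.comp (-X)) (a := -b) (t := -t)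
    (fun s hs => ⟨by linarith [(hω hs).2], by linarith [(hω hs).1]⟩)
    (by simpa [Measure.real, Measure.measure_neg] using hpos)
    (by simpa [natDegree_comp] using hdeg)
    (fun s hs => by simpa using hM _ hs)
  simpa [Measure.real, Measure.measure_neg, sub_eq_add_neg, add_comm] using h

end Polynomial

theorem exists_pos_and_div_le_of_le_add {d₁ d₂ m₁ m₂ μ L : ℝ} (hd₁ : 0 ≤ d₁) (hd₂ : 0 ≤ d₂)
    (hm₁ : 0 ≤ m₁) (hm₂ : 0 ≤ m₂) (hμ : 0 < μ) (hμm : μ ≤ m₁ + m₂) (hL : d₁ + d₂ ≤ L) :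
    (0 < m₁ ∧ d₁ / m₁ ≤ L / μ) ∨ (0 < m₂ ∧ d₂ / m₂ ≤ L / μ) := by
  have hL0 : 0 ≤ L := by linarith
  rcases hm₁.eq_or_lt with rfl | h₁
  · have h₂ : 0 < m₂ := by linarith
    refine .inr ⟨h₂, ?_⟩
    rw [div_le_div_iff₀ h₂ hμ]
    nlinarith
  rcases hm₂.eq_or_lt with rfl | h₂
  · refine .inl ⟨h₁, ?_⟩
    rw [div_le_div_iff₀ h₁ hμ]
    nlinarith
  simp only [h₁, h₂, true_and, div_le_div_iff₀ h₁ hμ, div_le_div_iff₀ h₂ hμ]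
  by_contra! h
  nlinarith [mul_le_mul_of_nonneg_left hμm hL0, mul_le_mul_of_nonneg_right hL hμ.le]

theorem stmt_3_general (a b : ℝ) (ω : Set ℝ)
    (hsub : ω ⊆ Set.Icc a b) (hpos : 0 < volume ω) (k : ℕ)
    (p : Polynomial ℝ) (hdeg : p.natDegree ≤ k) :
    ∀ t ∈ Set.Icc a b,
      |p.eval t| ≤ (4 * (b - a) / (volume ω).toReal) ^ k *
        sSup ((fun s => |p.eval s|) '' ω) := by
  intro t ht
  set M := sSup ((fun s => |p.eval s|) '' ω)
  have hM : ∀ s ∈ ω, |p.eval s| ≤ M := fun s hs =>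
    le_csSup ((isCompact_Icc.image_of_continuousOn p.continuous.abs.continuousOn).bddAbove.mono
      (image_mono hsub)) (mem_image_of_mem _ hs)
  have hfin : volume ω ≠ ∞ := measure_ne_top_of_subset hsub measure_Icc_lt_top.ne
  have hμ : 0 < volume.real ω := ENNReal.toReal_pos hpos.ne' hfin
  have hsplit : volume.real ω ≤ volume.real (ω ∩ Iic t) + volume.real (ω ∩ Ici t) :=
    (measureReal_mono (fun s hs => (le_total s t).imp (⟨hs, ·⟩) (⟨hs, ·⟩))
      (measure_union_ne_top (measure_ne_top_of_subset inter_subset_left hfin)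
        (measure_ne_top_of_subset inter_subset_left hfin))).trans (measureReal_union_le _ _)
  have hM0 : 0 ≤ M := (abs_nonneg _).trans (hM _ (nonempty_of_measure_ne_zero hpos.ne').some_mem)
  have hmono : ∀ {d m : ℝ}, 0 ≤ d → 0 < m → d / m ≤ (b - a) / volume.real ω →
      (4 * d / m) ^ k * M ≤ (4 * (b - a) / volume.real ω) ^ k * M := fun hd hm hle => by
    rw [mul_div_assoc, mul_div_assoc]
    gcongr
  rw [← measureReal_def]
  rcases exists_pos_and_div_le_of_le_add (L := b - a) (sub_nonneg.2 ht.1) (sub_nonneg.2 ht.2)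
    measureReal_nonneg measureReal_nonneg hμ hsplit (by linarith) with ⟨hm, hle⟩ | ⟨hm, hle⟩
  · exact (abs_eval_right_le_of_subset_Icc (fun s hs => ⟨(hsub hs.1).1, hs.2⟩) hm hdeg
      fun s hs => hM s hs.1).trans (hmono (sub_nonneg.2 ht.1) hm hle)
  · exact (abs_eval_left_le_of_subset_Icc (fun s hs => ⟨hs.2, (hsub hs.1).2⟩) hm hdeg
      fun s hs => hM s hs.1).trans (hmono (sub_nonneg.2 ht.2) hm hle)

/-- Brudnyi–Ganzburg (Remez-type) inequality on an interval. -/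
theorem stmt_3 (a b : ℝ) (hab : a < b) (ω : Set ℝ) (hω : MeasurableSet ω)
    (hsub : ω ⊆ Set.Icc a b) (hpos : 0 < volume ω) (k : ℕ)
    (p : Polynomial ℝ) (hdeg : p.natDegree ≤ k) :
    ∀ t ∈ Set.Icc a b,
      |p.eval t| ≤ (4 * (b - a) / (volume ω).toReal) ^ k *
        sSup ((fun s => |p.eval s|) '' ω) :=
  stmt_3_general a b ω hsub hpos k p hdeg
end

section
/- Let f : X → X be a homeomorphism of a compact metric space such that for some ε > 0, there is N₀ with the property that for every t > 0, X can be covered by N₀ Bowen balls B_f^t(x_i, ε/2). Then there exist points x_1,…,x_{N₀} ∈ X such that the sets B_f^∞(x_i, ε) := ⋂_{t>0} closure(B_f^t(x_i, ε)) cover X. -/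
/-!
The tuples `x ∈ X^N₀` whose closed `(ε/2, t)`-Bowen balls cover `X` form a closed set, nonempty
by hypothesis and decreasing in `t`; by compactness of `X^N₀` some tuple lies in all of them.
For this tuple and a point `y`, at every time some ball contains `y`; as there are finitely many
balls and the balls shrink with `t`, a single ball contains `y` at all times.
-/

open Filter Set

section BowenBall

variable {X : Type*} [PseudoMetricSpace X]

def bowenBall (f : X → X) (x : X) (ε : ℝ) (t : ℕ) : Set X :=
  {y | ∀ s ≤ t, dist (f^[s] x) (f^[s] y) < ε}

def closedBowenBall (f : X → X) (x : X) (ε : ℝ) (t : ℕ) : Set X :=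
  {y | ∀ s ≤ t, dist (f^[s] x) (f^[s] y) ≤ ε}

theorem bowenBall_subset_closedBowenBall (f : X → X) (x : X) (ε : ℝ) (t : ℕ) :
    bowenBall f x ε t ⊆ closedBowenBall f x ε t :=
  fun _ hy s hs => (hy s hs).le

theorem closedBowenBall_subset_bowenBall {δ ε : ℝ} (h : δ < ε) (f : X → X) (x : X) (t : ℕ) :
    closedBowenBall f x δ t ⊆ bowenBall f x ε t :=
  fun _ hy s hs => (hy s hs).trans_lt h

theorem closedBowenBall_antitone (f : X → X) (x : X) (ε : ℝ) :
    Antitone (closedBowenBall f x ε) :=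
  fun _ _ htt' _ hy s hs => hy s (hs.trans htt')

theorem isClosed_setOf_mem_closedBowenBall {f : X → X} (hf : Continuous f) (y : X) (ε : ℝ)
    (t : ℕ) : IsClosed {x | y ∈ closedBowenBall f x ε t} := by
  have : {x | y ∈ closedBowenBall f x ε t} = ⋂ s ∈ Iic t, {x | dist (f^[s] x) (f^[s] y) ≤ ε} := by
    ext; simp [closedBowenBall]
  rw [this]
  exact isClosed_biInter fun s _ =>
    isClosed_le ((hf.iterate s).dist continuous_const) continuous_const

def closedBowenCovers (f : X → X) (ι : Type*) (ε : ℝ) (t : ℕ) : Set (ι → X) :=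
  {x | ∀ y, ∃ i, y ∈ closedBowenBall f (x i) ε t}

theorem isClosed_closedBowenCovers {f : X → X} (hf : Continuous f) (ι : Type*) [Finite ι]
    (ε : ℝ) (t : ℕ) : IsClosed (closedBowenCovers f ι ε t) := by
  simp only [closedBowenCovers, ofPred_forall, ofPred_exists]
  exact isClosed_iInter fun y => isClosed_iUnion_of_finite fun i =>
    (isClosed_setOf_mem_closedBowenBall hf y ε t).preimage (f := fun x : ι → X => x i)
      (continuous_apply i)

theorem closedBowenCovers_antitone (f : X → X) (ι : Type*) (ε : ℝ) :
    Antitone (closedBowenCovers f ι ε) :=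
  fun _ _ htt' x hx y => (hx y).imp fun i hi => closedBowenBall_antitone f (x i) ε htt' hi

theorem exists_mem_iInter_closedBowenCovers [CompactSpace X] {f : X → X} (hf : Continuous f)
    (ι : Type*) [Finite ι] (ε : ℝ) (hne : ∀ t, (closedBowenCovers f ι ε t).Nonempty) :
    (⋂ t, closedBowenCovers f ι ε t).Nonempty :=
  IsCompact.nonempty_iInter_of_sequence_nonempty_isCompact_isClosed _
    (fun t => closedBowenCovers_antitone f ι ε t.le_succ) hne
    (isClosed_closedBowenCovers hf ι ε 0).isCompact (isClosed_closedBowenCovers hf ι ε)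

end BowenBall

theorem exists_forall_of_antitone_of_forall_exists {ι : Type*} [Finite ι] {P : ι → ℕ → Prop}
    (hP : ∀ i, Antitone (P i)) (h : ∀ t, ∃ i, P i t) : ∃ i, ∀ t, P i t := by
  obtain ⟨i, hi⟩ := frequently_exists.mp (Eventually.of_forall (f := atTop) h).frequently
  refine ⟨i, fun t => ?_⟩
  obtain ⟨t', htt', hit'⟩ := frequently_atTop.mp hi t
  exact hP i htt' hit'

/-- If for every time `t` the space is covered by `N₀` Bowen balls of radius `ε/2`,
then some fixed `N₀`-tuple of infinite (closed) Bowen balls of radius `ε` covers `X`. -/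
theorem stmt_9 (X : Type*) [MetricSpace X] [CompactSpace X] (f : X ≃ₜ X)
    (ε : ℝ) (hε : 0 < ε) (N₀ : ℕ)
    (hcov : ∀ t : ℕ, ∃ x : Fin N₀ → X, ∀ y : X, ∃ i : Fin N₀,
      ∀ s ≤ t, dist ((f : X → X)^[s] (x i)) ((f : X → X)^[s] y) < ε / 2) :
    ∃ x : Fin N₀ → X, ∀ y : X, ∃ i : Fin N₀,
      y ∈ ⋂ t : ℕ, closure {z : X |
        ∀ s ≤ t, dist ((f : X → X)^[s] (x i)) ((f : X → X)^[s] z) < ε} := by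
  have hne (t : ℕ) : (closedBowenCovers f (Fin N₀) (ε / 2) t).Nonempty := by
    obtain ⟨x, hx⟩ := hcov t
    exact ⟨x, fun y => (hx y).imp fun i => (bowenBall_subset_closedBowenBall f (x i) _ t ·)⟩
  obtain ⟨x, hx⟩ := exists_mem_iInter_closedBowenCovers f.continuous (Fin N₀) (ε / 2) hne
  refine ⟨x, fun y => ?_⟩
  obtain ⟨i, hi⟩ := exists_forall_of_antitone_of_forall_exists
    (fun i _ _ htt' hy => closedBowenBall_antitone f (x i) (ε / 2) htt' hy)
    (fun t => mem_iInter.mp hx t y)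
  exact ⟨i, mem_iInter.mpr fun t =>
    subset_closure (closedBowenBall_subset_bowenBall (half_lt_self hε) f (x i) t (hi t))⟩
end

section
/- Let f : X → X be a transitive homeomorphism of a compact metric space such that the family {f^n : n ∈ ℤ} is uniformly equicontinuous. Then f is topologically conjugate to a translation (rotation) on a compact abelian group. -/
/-!
Let `T` be the closure of the iterates `f ^ n` in `X → X` with the product topology.
Equicontinuity makes evaluation `T × X → X` jointly continuous, so composition is continuous on
`T`; density of the iterates then shows that `T` is closed under composition, commutative, and
closed under inverses. So `T` is a compact abelian group with continuous multiplication, hence a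
topological group. If the orbit of `x₀` is dense, evaluation at `x₀` is injective (elements of `T`
commute with the iterates, so two of them agreeing at `x₀` agree on the dense orbit) and has dense
compact image, so it is a homeomorphism `T ≃ₜ X`, and it turns `f` into translation by `f ∈ T`.
-/

open Filter Topology Set Function

/-- A topological conjugacy from `(X, f)` to a translation (rotation) on a
compact abelian topological group. -/
structure RotationConjugacy (X : Type*) [TopologicalSpace X] (f : X → X) where
  G : Type*
  [tG : TopologicalSpace G]
  [gG : CommGroup G]
  [topG : IsTopologicalGroup G]
  [compG : CompactSpace G]
  g : G
  h : X ≃ₜ G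
  conj : ∀ x : X, h (f x) = g * h x

universe u v w

theorem continuous_of_isClosed_graph {X Y : Type*} [TopologicalSpace X] [TopologicalSpace Y]
    [CompactSpace Y] {f : X → Y} (hf : IsClosed {p : X × Y | p.2 = f p.1}) : Continuous f := by
  refine continuous_iff_isClosed.mpr fun C hC => ?_
  have hpre : f ⁻¹' C = Prod.fst '' ({p : X × Y | p.2 = f p.1} ∩ Prod.snd ⁻¹' C) := by
    ext x
    constructor
    · exact fun hx => ⟨(x, f x), ⟨rfl, hx⟩, rfl⟩
    · rintro ⟨⟨x, y⟩, ⟨hxy : y = f x, hy : y ∈ C⟩, rfl⟩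
      exact (hxy ▸ hy : f x ∈ C)
  rw [hpre]
  exact isClosedMap_fst_of_compactSpace _ (hf.inter (hC.preimage continuous_snd))

theorem IsTopologicalGroup.of_compactSpace (G : Type*) [Group G] [TopologicalSpace G]
    [ContinuousMul G] [CompactSpace G] [T1Space G] : IsTopologicalGroup G where
  continuous_inv := continuous_of_isClosed_graph <| by
    simp_rw [eq_inv_iff_mul_eq_one]
    exact (isClosed_singleton (x := (1 : G))).preimage (continuous_snd.mul continuous_fst)

theorem Set.Equicontinuous.continuous_eval {X α : Type*} [TopologicalSpace X] [UniformSpace α]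
    {H : Set (X → α)} (hH : H.Equicontinuous) :
    Continuous fun p : H × X => (p.1 : X → α) p.2 := by
  refine continuous_iff_continuousAt.mpr fun ⟨g₀, x₀⟩ => ?_
  rw [ContinuousAt, Uniform.tendsto_nhds_right]
  intro U hU
  obtain ⟨V, hV, hVU⟩ := comp_mem_uniformity_sets hU
  have hpoint : ∀ᶠ g : H in 𝓝 g₀, ((g₀ : X → α) x₀, (g : X → α) x₀) ∈ V :=
    Uniform.tendsto_nhds_right.mp
      ((continuous_apply x₀).comp continuous_subtype_val).continuousAt.tendsto hV
  have hequi : ∀ᶠ x in 𝓝 x₀, ∀ g : H, ((g : X → α) x₀, (g : X → α) x) ∈ V := hH x₀ V hV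
  rw [nhds_prod_eq]
  exact (hpoint.prod_mk hequi).mono fun p hp => hVU (SetRel.prodMk_mem_comp hp.1 (hp.2 p.1))

section Envelope

variable {X : Type*} [UniformSpace X]

/-- The Ellis enveloping semigroup of `f`. -/
def envelope (f : Equiv.Perm X) : Set (X → X) := closure (range fun n : ℤ => ⇑(f ^ n))

namespace envelope

variable (f : Equiv.Perm X)

def zpow (n : ℤ) : envelope f := ⟨⇑(f ^ n), subset_closure (mem_range_self n)⟩

def compPair (p : envelope f × envelope f) : X → X := (p.1 : X → X) ∘ (p.2 : X → X)

def eval (x₀ : X) (g : envelope f) : X := (g : X → X) x₀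

theorem id_mem : id ∈ envelope f := by
  have h : ⇑(f ^ (0 : ℤ)) ∈ envelope f := (zpow f 0).2
  rwa [zpow_zero, Equiv.Perm.coe_one] at h

theorem denseRange_zpow : DenseRange (zpow f) := by
  rw [DenseRange, Subtype.dense_iff, ← range_comp]
  exact subset_rfl

theorem compPair_zpow (m n : ℤ) : compPair f (zpow f m, zpow f n) = ⇑(f ^ (m + n)) := by
  rw [zpow_add, Equiv.Perm.coe_mul]
  rfl

theorem continuous_eval (x₀ : X) : Continuous (eval f x₀) :=
  (continuous_apply x₀).comp continuous_subtype_val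

instance [CompactSpace X] : CompactSpace (envelope f) :=
  isCompact_iff_compactSpace.mp isClosed_closure.isCompact

variable {f}

theorem equicontinuous (hf : Equicontinuous fun n : ℤ => ⇑(f ^ n)) :
    (envelope f).Equicontinuous :=
  (equicontinuous_iff_range.mp hf).closure

theorem continuous_compPair (hf : Equicontinuous fun n : ℤ => ⇑(f ^ n)) :
    Continuous (compPair f) :=
  continuous_pi fun x => (equicontinuous hf).continuous_eval.comp <|
    continuous_fst.prodMk ((continuous_apply x).comp (continuous_subtype_val.comp continuous_snd))

theorem compPair_mem (hf : Equicontinuous fun n : ℤ => ⇑(f ^ n)) (p : envelope f × envelope f) :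
    compPair f p ∈ envelope f :=
  ((denseRange_zpow f).prodMap (denseRange_zpow f)).induction_on (p := (compPair f · ∈ envelope f))
    p (isClosed_closure.preimage (continuous_compPair hf))
    fun ⟨m, n⟩ => compPair_zpow f m n ▸ (zpow f (m + n)).2

theorem compPair_swap [T2Space X] (hf : Equicontinuous fun n : ℤ => ⇑(f ^ n))
    (p : envelope f × envelope f) : compPair f p.swap = compPair f p := by
  refine congrFun (((denseRange_zpow f).prodMap (denseRange_zpow f)).equalizer
    ((continuous_compPair hf).comp continuous_swap) (continuous_compPair hf) ?_) p
  funext ⟨m, n⟩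
  simp only [comp_apply, Prod.map_apply, Prod.swap_prod_mk, compPair_zpow, add_comm]

/-- The pairs `(g, h)` with `g ∘ h = id` form a compact set, so its first projection is closed;
it contains every `f ^ n`, hence everything. -/
theorem exists_compPair_eq_id [CompactSpace X] [T2Space X]
    (hf : Equicontinuous fun n : ℤ => ⇑(f ^ n)) (g : envelope f) :
    ∃ h, compPair f (g, h) = id := by
  have hclosed : IsClosed (Prod.fst '' (compPair f ⁻¹' {id})) :=
    ((isClosed_singleton.preimage (continuous_compPair hf)).isCompact.image continuous_fst).isClosed
  obtain ⟨⟨_, h⟩, hgh, rfl⟩ := (denseRange_zpow f).induction_on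
    (p := (· ∈ Prod.fst '' (compPair f ⁻¹' {id}))) g hclosed
    fun n => ⟨(zpow f n, zpow f (-n)), by simp [compPair_zpow], rfl⟩
  exact ⟨h, hgh⟩

noncomputable abbrev commGroup [CompactSpace X] [T2Space X]
    (hf : Equicontinuous fun n : ℤ => ⇑(f ^ n)) : CommGroup (envelope f) where
  mul g h := ⟨compPair f (g, h), compPair_mem hf (g, h)⟩
  one := ⟨id, id_mem f⟩
  inv g := (exists_compPair_eq_id hf g).choose
  mul_assoc _ _ _ := rfl
  one_mul _ := rfl
  mul_one _ := rfl
  inv_mul_cancel g :=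
    Subtype.ext <| (compPair_swap hf (g, _)).trans (exists_compPair_eq_id hf g).choose_spec
  mul_comm g h := Subtype.ext (compPair_swap hf (h, g))

theorem isTopologicalGroup [CompactSpace X] [T2Space X]
    (hf : Equicontinuous fun n : ℤ => ⇑(f ^ n)) :
    letI := commGroup hf
    IsTopologicalGroup (envelope f) :=
  letI := commGroup hf
  haveI : ContinuousMul (envelope f) := ⟨(continuous_compPair hf).subtype_mk _⟩
  IsTopologicalGroup.of_compactSpace _

theorem injective_eval [T2Space X] (hf : Equicontinuous fun n : ℤ => ⇑(f ^ n)) {x₀ : X}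
    (hx₀ : DenseRange fun n : ℤ => (f ^ n) x₀) : Injective (eval f x₀) := by
  have hcomm (g : envelope f) (n : ℤ) : (g : X → X) ((f ^ n) x₀) = (f ^ n) (eval f x₀ g) :=
    congrFun (compPair_swap hf (zpow f n, g)) x₀
  intro g h hgh
  refine Subtype.ext <| hx₀.equalizer ((equicontinuous hf).continuous_of_mem g.2)
    ((equicontinuous hf).continuous_of_mem h.2) (funext fun n => ?_)
  simp only [comp_apply, hcomm, hgh]

theorem surjective_eval [CompactSpace X] [T2Space X] {x₀ : X}
    (hx₀ : DenseRange fun n : ℤ => (f ^ n) x₀) : Surjective (eval f x₀) := by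
  rw [← range_eq_univ, ← (isCompact_range (continuous_eval f x₀)).isClosed.closure_eq]
  exact (DenseRange.of_comp (f := eval f x₀) (g := zpow f) hx₀).closure_eq

noncomputable def evalHomeomorph [CompactSpace X] [T2Space X]
    (hf : Equicontinuous fun n : ℤ => ⇑(f ^ n)) {x₀ : X}
    (hx₀ : DenseRange fun n : ℤ => (f ^ n) x₀) : envelope f ≃ₜ X :=
  (continuous_eval f x₀).homeoOfEquivCompactToT2
    (f := Equiv.ofBijective _ ⟨injective_eval hf hx₀, surjective_eval hx₀⟩)

end envelope

end Envelope

noncomputable def rotationConjugacyOfDenseOrbit {X : Type u} [UniformSpace X] [CompactSpace X]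
    [T2Space X] {f : Equiv.Perm X} (hf : Equicontinuous fun n : ℤ => ⇑(f ^ n)) {x₀ : X}
    (hx₀ : DenseRange fun n : ℤ => (f ^ n) x₀) : RotationConjugacy.{u, u} X f :=
  letI := envelope.commGroup hf
  { G := envelope f
    topG := envelope.isTopologicalGroup hf
    g := envelope.zpow f 1
    h := (envelope.evalHomeomorph hf hx₀).symm
    conj := fun x => (envelope.evalHomeomorph hf hx₀).injective <| by
      rw [Homeomorph.apply_symm_apply]
      change f x = (f ^ (1 : ℤ)) (envelope.evalHomeomorph hf hx₀ _)
      rw [Homeomorph.apply_symm_apply, zpow_one] }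

noncomputable def RotationConjugacy.shrink {X : Type u} [TopologicalSpace X] {f : X → X}
    (c : RotationConjugacy.{u, v} X f) [Small.{w} X] : RotationConjugacy.{u, w} X f :=
  letI := c.tG; letI := c.gG; haveI := c.topG; haveI := c.compG
  haveI : Small.{w} c.G := (small_congr c.h.toEquiv).mp ‹_›
  { G := Shrink.{w} c.G
    topG := IsInducing.topologicalGroup Shrink.mulEquiv (Shrink.homeomorph c.G).symm.isInducing
    compG := (Shrink.homeomorph c.G).compactSpace
    g := equivShrink _ c.g
    h := c.h.trans (Shrink.homeomorph c.G)
    conj := fun x => by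
      rw [Homeomorph.trans_apply, c.conj]
      exact equivShrink_mul _ _ }

/-- A transitive, uniformly equicontinuous homeomorphism of a compact metric space
is topologically conjugate to a translation on a compact abelian group. -/
theorem stmt_10 (X : Type*) [MetricSpace X] [CompactSpace X] (f : X ≃ₜ X)
    (htrans : ∃ x₀ : X, Dense (Set.range fun n : ℤ => (f.toEquiv ^ n) x₀))
    (hequi : ∀ ε > (0:ℝ), ∃ δ > (0:ℝ), ∀ x y : X, dist x y < δ →
      ∀ n : ℤ, dist ((f.toEquiv ^ n) x) ((f.toEquiv ^ n) y) < ε) :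
    Nonempty (RotationConjugacy X f) := by
  obtain ⟨x₀, hx₀⟩ := htrans
  have hf : Equicontinuous fun n : ℤ => ⇑(f.toEquiv ^ n) :=
    (Metric.uniformEquicontinuous_iff.mpr hequi).equicontinuous
  -- `X` embeds into `ℓ^∞(ℕ, ℝ)`, so it is small in every universe.
  exact ⟨@RotationConjugacy.shrink _ _ _ (rotationConjugacyOfDenseOrbit hf hx₀)
    (small_of_injective (kuratowskiEmbedding.isometry X).injective)⟩
end
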